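/- arXiv:2111.02204 — 4 statements merged into one kernel-verified Lean document; each statement's English description precedes it below -/
import Mathlib

section
/- Suppose S_γ is orthogonally monotone, a* ∈ S_γ, s* ∈ ℝ_+^d with coordinates s*_i ≥ 0, and f*(x) = f(x)e^{s*·x − λ(s*)} ≥ ε' > 0 for all x with a* ≤ x ≤ a* + ε𝟙. Then P(X ∈ S_γ) ≥ e^{−I(a*)} ε' ∏_{i=1}^d (1 − e^{−s*_i ε})/s*_i, where I(a*) = s*·a* − λ(s*) and the factor (1−e^{−s*_i ε})/s*_i is interpreted as ε when s*_i = 0. -/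
open MeasureTheory Matrix Set Real

/-!
On the rectangle `[a*, a* + ε𝟙]` the density satisfies `f(x) ≥ ε' e^{λ - s*·x}`, and orthogonal
monotonicity puts the whole rectangle inside `S_γ`. Integrating the lower bound over the rectangle
gives the claim, since `e^{-s*·x}` factors over the coordinates and each one-dimensional integral
is `e^{-s*ᵢ a*ᵢ} (1 - e^{-s*ᵢ ε}) / s*ᵢ`.
-/

def OrthogonallyMonotone {ι : Type*} (S : Set (ι → ℝ)) : Prop :=
  ∀ x x' : ι → ℝ, (∀ i, 0 ≤ x i) → (∀ i, 0 ≤ x' i) → (∀ i, x i ≤ x' i) → x ∈ S → x' ∈ S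

theorem OrthogonallyMonotone.Ici_subset {ι : Type*} {S : Set (ι → ℝ)} {a : ι → ℝ}
    (hS : OrthogonallyMonotone S) (ha : a ∈ S) (ha0 : 0 ≤ a) : Ici a ⊆ S :=
  fun x hx ↦ hS a x ha0 (fun i ↦ (ha0 i).trans (hx i)) hx ha

theorem pi_Icc_add_subset_Ici {ι : Type*} (a : ι → ℝ) (ε : ℝ) :
    univ.pi (fun i ↦ Icc (a i) (a i + ε)) ⊆ Ici a :=
  fun _ hx i ↦ (hx i (mem_univ i)).1

theorem integral_Icc_exp_neg_mul (s a : ℝ) {ε : ℝ} (hε : 0 ≤ ε) :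
    ∫ t in Icc a (a + ε), exp (-(s * t)) =
      exp (-(s * a)) * (if s = 0 then ε else (1 - exp (-(s * ε))) / s) := by
  split_ifs with hs
  · simp [hs, hε]
  rw [integral_Icc_eq_integral_Ioc, ← intervalIntegral.integral_of_le (by linarith)]
  have hderiv : ∀ t ∈ uIcc a (a + ε),
      HasDerivAt (fun t ↦ exp (-(s * t)) / -s) (exp (-(s * t))) t := fun t _ ↦ by
    have h : HasDerivAt (fun t ↦ -(s * t)) (-s) t :=
      ((hasDerivAt_id' t).const_mul s).neg.congr_deriv (by ring)
    exact (h.exp.div_const (-s)).congr_deriv (by field_simp)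
  rw [intervalIntegral.integral_eq_sub_of_hasDerivAt hderiv
    (Continuous.intervalIntegrable (by fun_prop) _ _),
    show -(s * (a + ε)) = -(s * a) + -(s * ε) by ring, exp_add]
  field_simp
  ring

theorem integral_pi_Icc_exp_neg_dotProduct {ι : Type*} [Fintype ι] (s a : ι → ℝ) {ε : ℝ}
    (hε : 0 ≤ ε) :
    ∫ x in univ.pi (fun i ↦ Icc (a i) (a i + ε)), exp (-(s ⬝ᵥ x)) =
      exp (-(s ⬝ᵥ a)) * ∏ i, (if s i = 0 then ε else (1 - exp (-(s i * ε))) / s i) := by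
  have hfactor : ∀ x : ι → ℝ, exp (-(s ⬝ᵥ x)) = ∏ i, exp (-(s i * x i)) := fun x ↦ by
    rw [← exp_sum, dotProduct, Finset.sum_neg_distrib]
  simp_rw [volume_pi, Measure.restrict_pi_pi, hfactor,
    integral_fintype_prod_eq_prod (fun i t ↦ exp (-(s i * t))),
    integral_Icc_exp_neg_mul _ _ hε, Finset.prod_mul_distrib]

theorem stmt_10_general (d : ℕ) (f : (Fin d → ℝ) → ℝ)
    (hf0 : ∀ x, 0 ≤ f x)
    (hfint : Integrable f (volume : Measure (Fin d → ℝ)))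
    (S : Set (Fin d → ℝ))
    (hSpos : S ⊆ {x | ∀ i, 0 ≤ x i})
    (hmono : ∀ x x' : Fin d → ℝ, (∀ i, 0 ≤ x i) → (∀ i, 0 ≤ x' i) →
      (∀ i, x i ≤ x' i) → x ∈ S → x' ∈ S)
    (astar : Fin d → ℝ) (ha : astar ∈ S)
    (sstar : Fin d → ℝ)
    (lam ε ε' : ℝ) (hε : 0 < ε)
    (hlb : ∀ x : Fin d → ℝ, (∀ i, astar i ≤ x i ∧ x i ≤ astar i + ε) →
      ε' ≤ f x * Real.exp (sstar ⬝ᵥ x - lam)) :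
    Real.exp (-(sstar ⬝ᵥ astar - lam)) * ε' *
        (∏ i, if sstar i = 0 then ε else (1 - Real.exp (-(sstar i * ε))) / sstar i)
      ≤ ∫ x in S, f x := by
  set R := univ.pi (fun i ↦ Icc (astar i) (astar i + ε))
  have hRS : R ⊆ S := (pi_Icc_add_subset_Ici astar ε).trans
    (OrthogonallyMonotone.Ici_subset hmono ha (hSpos ha))
  have hf_ge : ∀ x ∈ R, ε' * exp lam * exp (-(sstar ⬝ᵥ x)) ≤ f x := fun x hx ↦ by
    have h := mul_le_mul_of_nonneg_right (hlb x fun i ↦ hx i (mem_univ i))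
      (exp_pos (-(sstar ⬝ᵥ x - lam))).le
    rwa [mul_assoc, ← exp_add, add_neg_cancel, exp_zero, mul_one, neg_sub, sub_eq_add_neg,
      exp_add, ← mul_assoc] at h
  calc Real.exp (-(sstar ⬝ᵥ astar - lam)) * ε' *
        (∏ i, if sstar i = 0 then ε else (1 - Real.exp (-(sstar i * ε))) / sstar i)
      = ∫ x in R, ε' * exp lam * exp (-(sstar ⬝ᵥ x)) := by
        rw [integral_const_mul, integral_pi_Icc_exp_neg_dotProduct _ _ hε.le, neg_sub,
          sub_eq_add_neg, exp_add]
        ring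
    _ ≤ ∫ x in R, f x :=
        setIntegral_mono_on (ContinuousOn.integrableOn_compact (isCompact_univ_pi
          fun _ ↦ isCompact_Icc) (by fun_prop)) hfint.integrableOn
          (MeasurableSet.univ_pi fun _ ↦ measurableSet_Icc) hf_ge
    _ ≤ ∫ x in S, f x :=
        setIntegral_mono_set hfint.integrableOn (ae_of_all _ hf0) (ae_of_all _ hRS)

/-- Lower bound on the rare-event probability for an orthogonally monotone set:
if the tilted density `f*(x) = f(x)e^{s*·x − λ(s*)}` is at least `ε'` on the
rectangle `[a*, a* + ε𝟙]`, then
`P(X ∈ S_γ) ≥ e^{−I(a*)} ε' ∏ᵢ (1 − e^{−s*ᵢ ε})/s*ᵢ`, with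
`I(a*) = s*·a* − λ(s*)` and the factor interpreted as `ε` when `s*ᵢ = 0`. -/
theorem stmt_10 (d : ℕ) (f : (Fin d → ℝ) → ℝ)
    (hf0 : ∀ x, 0 ≤ f x) (hfm : Measurable f)
    (hfint : Integrable f (volume : Measure (Fin d → ℝ)))
    (hf1 : ∫ x, f x = 1)
    (S : Set (Fin d → ℝ)) (hSm : MeasurableSet S)
    (hSpos : S ⊆ {x | ∀ i, 0 ≤ x i})
    (hmono : ∀ x x' : Fin d → ℝ, (∀ i, 0 ≤ x i) → (∀ i, 0 ≤ x' i) →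
      (∀ i, x i ≤ x' i) → x ∈ S → x' ∈ S)
    (astar : Fin d → ℝ) (ha : astar ∈ S)
    (sstar : Fin d → ℝ) (hs : ∀ i, 0 ≤ sstar i)
    (lam ε ε' : ℝ) (hε : 0 < ε) (hε' : 0 < ε')
    (hlb : ∀ x : Fin d → ℝ, (∀ i, astar i ≤ x i ∧ x i ≤ astar i + ε) →
      ε' ≤ f x * Real.exp (sstar ⬝ᵥ x - lam)) :
    Real.exp (-(sstar ⬝ᵥ astar - lam)) * ε' *
        (∏ i, if sstar i = 0 then ε else (1 - Real.exp (-(sstar i * ε))) / sstar i)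
      ≤ ∫ x in S, f x :=
  stmt_10_general d f hf0 hfint S hSpos hmono astar ha sstar lam ε ε' hε hlb
end

section
/- Let S_γ = ⋃_j S_γ^j be a disjoint decomposition with S_γ^j ⊂ {x : s_j·(x − a_j) ≥ 0}, and let the IS density be p̃(x) = f(x) ∑_j α_j e^{s_j·x − λ(s_j)} with α_j > 0, ∑_j α_j = 1. Then the IS estimator Z = 1(X ∈ S_γ) L(X) with L(x) = (∑_j α_j e^{s_j·x − λ(s_j)})^{−1} satisfies Ẽ[Z²] ≤ (∑_j α_j^{−2}) e^{−2 min_j I(a_j)}, where I(a_j) = s_j·a_j − λ(s_j). -/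
/-!
On the piece `Sⱼ` the `j`-th term of the mixture alone gives
`L(x)⁻¹ ≥ αⱼ e^{sⱼ·x − λ(sⱼ)} ≥ αⱼ e^{I(aⱼ)}`, because `sⱼ·x ≥ sⱼ·aⱼ` there. Hence
`∫_{Sⱼ} L² p̃ ≤ αⱼ⁻² e^{−2 I(aⱼ)} ∫ p̃`, and `∫ p̃ = ∑ⱼ αⱼ e^{−λ(sⱼ)} ∫ e^{sⱼ·x} f = ∑ⱼ αⱼ = 1`;
summing over the disjoint pieces gives the bound.
-/

open MeasureTheory Matrix

section SecondMoment

variable {X ι : Type*} [MeasurableSpace X] {μ : Measure X} {q w : X → ℝ}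

theorem integrableOn_sq_mul_of_abs_le {A : Set X} {c : ℝ} (hA : MeasurableSet A)
    (hq : Integrable q μ) (hw : AEStronglyMeasurable w μ) (hwc : ∀ x ∈ A, |w x| ≤ c) :
    IntegrableOn (fun x => w x ^ 2 * q x) A μ := by
  refine hq.integrableOn.bdd_mul (c := c ^ 2) (hw.pow 2).restrict ?_
  filter_upwards [ae_restrict_mem hA] with x hx
  rw [Real.norm_eq_abs, abs_of_nonneg (sq_nonneg _)]
  exact sq_le_sq.2 ((hwc x hx).trans (le_abs_self c))

theorem setIntegral_sq_mul_le_of_abs_le {A : Set X} {c : ℝ} (hA : MeasurableSet A)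
    (hq0 : ∀ x, 0 ≤ q x) (hq : Integrable q μ) (hw : AEStronglyMeasurable w μ)
    (hwc : ∀ x ∈ A, |w x| ≤ c) :
    ∫ x in A, w x ^ 2 * q x ∂μ ≤ c ^ 2 * ∫ x, q x ∂μ :=
  calc ∫ x in A, w x ^ 2 * q x ∂μ ≤ ∫ x in A, c ^ 2 * q x ∂μ :=
        setIntegral_mono_on (integrableOn_sq_mul_of_abs_le hA hq hw hwc)
          (hq.integrableOn.const_mul _) hA fun x hx =>
          mul_le_mul_of_nonneg_right (sq_le_sq.2 ((hwc x hx).trans (le_abs_self c))) (hq0 x)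
    _ = c ^ 2 * ∫ x in A, q x ∂μ := integral_const_mul _ _
    _ ≤ c ^ 2 * ∫ x, q x ∂μ :=
        mul_le_mul_of_nonneg_left (setIntegral_le_integral hq (.of_forall hq0)) (sq_nonneg c)

theorem setIntegral_iUnion_sq_mul_le [Fintype ι] {A : ι → Set X} {c : ι → ℝ}
    (hA : ∀ j, MeasurableSet (A j)) (hdisj : Pairwise (Function.onFun Disjoint A))
    (hq0 : ∀ x, 0 ≤ q x) (hq : Integrable q μ) (hw : AEStronglyMeasurable w μ)
    (hwc : ∀ j, ∀ x ∈ A j, |w x| ≤ c j) :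
    ∫ x in ⋃ j, A j, w x ^ 2 * q x ∂μ ≤ (∑ j, c j ^ 2) * ∫ x, q x ∂μ := by
  rw [integral_iUnion_fintype hA hdisj fun j => integrableOn_sq_mul_of_abs_le (hA j) hq hw (hwc j),
    Finset.sum_mul]
  exact Finset.sum_le_sum fun j _ => setIntegral_sq_mul_le_of_abs_le (hA j) hq0 hq hw (hwc j)

end SecondMoment

section MixtureTilt

variable {n ι : Type*} [Fintype n] [Fintype ι] {μ : Measure (n → ℝ)}
  {f : (n → ℝ) → ℝ} {s : ι → n → ℝ} {lam α : ι → ℝ}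

/-- The importance-sampling density is `p̃ = f * mixtureTilt` and the likelihood ratio is
`L = mixtureTilt⁻¹`. -/
noncomputable def mixtureTilt (α lam : ι → ℝ) (s : ι → n → ℝ) (x : n → ℝ) : ℝ :=
  ∑ j, α j * Real.exp (s j ⬝ᵥ x - lam j)

theorem continuous_mixtureTilt : Continuous (mixtureTilt α lam s) :=
  continuous_finsetSum _ fun _ _ =>
    continuous_const.mul ((continuous_const.dotProduct continuous_id).sub continuous_const).rexp

theorem mixtureTilt_pos [Nonempty ι] (hα : ∀ j, 0 < α j) (x : n → ℝ) :
    0 < mixtureTilt α lam s x :=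
  Finset.sum_pos (fun j _ => mul_pos (hα j) (Real.exp_pos _)) Finset.univ_nonempty

theorem mul_mixtureTilt_eq (x : n → ℝ) :
    f x * mixtureTilt α lam s x =
      ∑ j, α j * Real.exp (-lam j) * (Real.exp (s j ⬝ᵥ x) * f x) := by
  rw [mixtureTilt, Finset.mul_sum]
  refine Finset.sum_congr rfl fun j _ => ?_
  rw [Real.exp_sub, Real.exp_neg]
  ring

theorem integrable_mul_mixtureTilt
    (hint : ∀ j, Integrable (fun x => Real.exp (s j ⬝ᵥ x) * f x) μ) :
    Integrable (fun x => f x * mixtureTilt α lam s x) μ := by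
  simp_rw [mul_mixtureTilt_eq]
  exact integrable_finsetSum _ fun j _ => (hint j).const_mul _

theorem integral_mul_mixtureTilt (hαsum : ∑ j, α j = 1)
    (hcgf : ∀ j, Real.exp (lam j) = ∫ x, Real.exp (s j ⬝ᵥ x) * f x ∂μ)
    (hint : ∀ j, Integrable (fun x => Real.exp (s j ⬝ᵥ x) * f x) μ) :
    ∫ x, f x * mixtureTilt α lam s x ∂μ = 1 := by
  simp_rw [mul_mixtureTilt_eq]
  rw [integral_finsetSum _ fun j _ => (hint j).const_mul _, ← hαsum]
  refine Finset.sum_congr rfl fun j _ => ?_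
  rw [integral_const_mul, ← hcgf j, mul_assoc, ← Real.exp_add, neg_add_cancel, Real.exp_zero,
    mul_one]

theorem abs_inv_mixtureTilt_le [Nonempty ι] (hα : ∀ j, 0 < α j) {j : ι} {m : ℝ} {x : n → ℝ}
    (hm : m ≤ s j ⬝ᵥ x - lam j) :
    |(mixtureTilt α lam s x)⁻¹| ≤ (α j)⁻¹ * Real.exp (-m) := by
  have hterm : α j * Real.exp m ≤ mixtureTilt α lam s x :=
    calc α j * Real.exp m ≤ α j * Real.exp (s j ⬝ᵥ x - lam j) := by gcongr; exact (hα j).le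
      _ ≤ mixtureTilt α lam s x :=
          Finset.single_le_sum (f := fun i => α i * Real.exp (s i ⬝ᵥ x - lam i))
            (fun i _ => mul_nonneg (hα i).le (Real.exp_pos _).le) (Finset.mem_univ j)
  rw [abs_of_pos (inv_pos.2 (mixtureTilt_pos hα x)), Real.exp_neg, ← mul_inv]
  exact inv_anti₀ (mul_pos (hα j) (Real.exp_pos m)) hterm

end MixtureTilt

theorem stmt_11_general (d : ℕ) {ι : Type} [Fintype ι] [Nonempty ι]
    (f : (Fin d → ℝ) → ℝ) (hf0 : ∀ x, 0 ≤ f x)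
    (s a : ι → (Fin d → ℝ)) (lam α : ι → ℝ)
    (hα : ∀ j, 0 < α j) (hαsum : ∑ j, α j = 1)
    (hcgf : ∀ j, Real.exp (lam j) = ∫ x, Real.exp (s j ⬝ᵥ x) * f x)
    (hcgfint : ∀ j, Integrable (fun x => Real.exp (s j ⬝ᵥ x) * f x)
      (volume : Measure (Fin d → ℝ)))
    (S : Set (Fin d → ℝ)) (Sj : ι → Set (Fin d → ℝ))
    (hSjm : ∀ j, MeasurableSet (Sj j))
    (hdisj : Pairwise (Function.onFun Disjoint Sj))
    (hcover : S = ⋃ j, Sj j)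
    (hhalf : ∀ j, ∀ x ∈ Sj j, 0 ≤ s j ⬝ᵥ (x - a j)) :
    ∫ x in S, ((∑ j, α j * Real.exp (s j ⬝ᵥ x - lam j))⁻¹) ^ 2 *
        (f x * ∑ j, α j * Real.exp (s j ⬝ᵥ x - lam j))
      ≤ (∑ j, ((α j)⁻¹) ^ 2) *
        Real.exp (-2 * Finset.univ.inf' Finset.univ_nonempty
          (fun j => s j ⬝ᵥ a j - lam j)) := by
  set m := Finset.univ.inf' Finset.univ_nonempty fun j => s j ⬝ᵥ a j - lam j
  have hbound : ∀ j, ∀ x ∈ Sj j, |(mixtureTilt α lam s x)⁻¹| ≤ (α j)⁻¹ * Real.exp (-m) := by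
    intro j x hx
    refine abs_inv_mixtureTilt_le hα ((Finset.inf'_le _ (Finset.mem_univ j)).trans ?_)
    have := hhalf j x hx
    rw [dotProduct_sub] at this
    linarith
  change ∫ x in S, (mixtureTilt α lam s x)⁻¹ ^ 2 * (f x * mixtureTilt α lam s x) ≤ _
  rw [hcover]
  calc _ ≤ (∑ j, ((α j)⁻¹ * Real.exp (-m)) ^ 2) * ∫ x, f x * mixtureTilt α lam s x :=
        setIntegral_iUnion_sq_mul_le hSjm hdisj
          (fun x => mul_nonneg (hf0 x) (mixtureTilt_pos hα x).le)
          (integrable_mul_mixtureTilt hcgfint)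
          (continuous_mixtureTilt.inv₀ fun x => (mixtureTilt_pos hα x).ne').aestronglyMeasurable
          hbound
    _ = (∑ j, (α j)⁻¹ ^ 2) * Real.exp (-2 * m) := by
        rw [integral_mul_mixtureTilt hαsum hcgf hcgfint, mul_one, Finset.sum_mul]
        refine Finset.sum_congr rfl fun j _ => ?_
        rw [mul_pow, ← Real.exp_nat_mul]
        ring_nf

/-- Second-moment bound for the mixture importance sampler built from the
dominating-point decomposition `S = ⋃ⱼ Sⱼ`, `Sⱼ ⊆ {x : sⱼ·(x − aⱼ) ≥ 0}`:
`Ẽ[Z²] ≤ (∑ⱼ αⱼ⁻²) e^{−2 minⱼ I(aⱼ)}` where `I(aⱼ) = sⱼ·aⱼ − λ(sⱼ)`. -/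
theorem stmt_11 (d : ℕ) {ι : Type} [Fintype ι] [Nonempty ι]
    (f : (Fin d → ℝ) → ℝ) (hf0 : ∀ x, 0 ≤ f x) (hfm : Measurable f)
    (hfint : Integrable f (volume : Measure (Fin d → ℝ)))
    (hf1 : ∫ x, f x = 1)
    (s a : ι → (Fin d → ℝ)) (lam α : ι → ℝ)
    (hα : ∀ j, 0 < α j) (hαsum : ∑ j, α j = 1)
    (hcgf : ∀ j, Real.exp (lam j) = ∫ x, Real.exp (s j ⬝ᵥ x) * f x)
    (hcgfint : ∀ j, Integrable (fun x => Real.exp (s j ⬝ᵥ x) * f x)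
      (volume : Measure (Fin d → ℝ)))
    (S : Set (Fin d → ℝ)) (Sj : ι → Set (Fin d → ℝ))
    (hSjm : ∀ j, MeasurableSet (Sj j))
    (hdisj : Pairwise (Function.onFun Disjoint Sj))
    (hcover : S = ⋃ j, Sj j)
    (hhalf : ∀ j, ∀ x ∈ Sj j, 0 ≤ s j ⬝ᵥ (x - a j)) :
    ∫ x in S, ((∑ j, α j * Real.exp (s j ⬝ᵥ x - lam j))⁻¹) ^ 2 *
        (f x * ∑ j, α j * Real.exp (s j ⬝ᵥ x - lam j))
      ≤ (∑ j, ((α j)⁻¹) ^ 2) *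
        Real.exp (-2 * Finset.univ.inf' Finset.univ_nonempty
          (fun j => s j ⬝ᵥ a j - lam j)) :=
  stmt_11_general d f hf0 s a lam α hα hαsum hcgf hcgfint S Sj hSjm hdisj hcover hhalf
end

section
/- In the setting of the previous statement with 0 < k ≤ 1, the ratio Ẽ[Z²]/Ẽ[Z]² grows exponentially in γ; specifically Ẽ[Z] = O(e^{−k²γ²/2}/γ) and Ẽ[Z²] = O(e^{γ²}) as γ → ∞, so the single-dominating-point IS estimator fails to be logarithmically efficient. -/
/-!
The first moment is governed by the lighter tail: `Φ̄(γ) ≤ Φ̄(kγ) ≤ e^{-k²γ²/2}/(kγ)`.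
The second moment contains `e^{γ²} Φ̄((k-1)γ)`, and `(k-1)γ ≤ 0` keeps that tail above
`Φ̄(0) > 0`. Since also `Ẽ[Z] ≤ 2`, the relative second moment is at least a constant times `e^{γ²}`.
-/

open MeasureTheory ProbabilityTheory Filter Asymptotics Real Set

noncomputable def gaussianTail (t : ℝ) : ℝ := (gaussianReal 0 1).real (Ici t)

lemma gaussianTail_antitone : Antitone gaussianTail := fun _ _ hst =>
  measureReal_mono (Ici_subset_Ici.mpr hst)

lemma gaussianTail_le_one (t : ℝ) : gaussianTail t ≤ 1 := measureReal_le_one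

lemma gaussianTail_pos (t : ℝ) : 0 < gaussianTail t := by
  refine ENNReal.toReal_pos (fun h => ?_) (measure_ne_top _ _)
  simpa [Real.volume_Ici] using gaussianReal_absolutelyContinuous' 0 one_ne_zero h

lemma gaussianTail_eq_integral (t : ℝ) :
    gaussianTail t = ∫ x in Ici t, gaussianPDFReal 0 1 x := by
  rw [gaussianTail, measureReal_def, gaussianReal_apply_eq_integral 0 one_ne_zero,
    ENNReal.toReal_ofReal (setIntegral_nonneg measurableSet_Ici
      fun x _ => gaussianPDFReal_nonneg 0 1 x)]

-- Exponential tilting: `-x²/2 ≤ t²/2 - t x` is `(x - t)² ≥ 0`.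
lemma gaussianPDFReal_le_exp (t x : ℝ) : gaussianPDFReal 0 1 x ≤ exp (t ^ 2 / 2 + -t * x) := by
  have hnorm : (√(2 * π))⁻¹ ≤ 1 :=
    inv_le_one_of_one_le₀ (one_le_sqrt.mpr (by nlinarith [pi_gt_three]))
  have hexp : exp (-x ^ 2 / 2) ≤ exp (t ^ 2 / 2 + -t * x) :=
    exp_le_exp.mpr (by nlinarith [sq_nonneg (x - t)])
  rw [gaussianPDFReal_def]
  simpa using (mul_le_of_le_one_left (exp_nonneg _) hnorm).trans hexp

lemma gaussianTail_le_exp_div {t : ℝ} (ht : 0 < t) : gaussianTail t ≤ exp (-t ^ 2 / 2) / t := by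
  have hint : IntegrableOn (fun x => exp (t ^ 2 / 2) * exp (-t * x)) (Ioi t) :=
    (exp_neg_integrableOn_Ioi t ht).const_mul _
  calc gaussianTail t = ∫ x in Ioi t, gaussianPDFReal 0 1 x := by
        rw [gaussianTail_eq_integral, integral_Ici_eq_integral_Ioi]
    _ ≤ ∫ x in Ioi t, exp (t ^ 2 / 2) * exp (-t * x) :=
        setIntegral_mono_on (integrable_gaussianPDFReal 0 1).integrableOn hint measurableSet_Ioi
          fun x _ => (gaussianPDFReal_le_exp t x).trans_eq (exp_add _ _)
    _ = exp (-t ^ 2 / 2) / t := by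
        rw [integral_const_mul, integral_exp_mul_Ioi (neg_lt_zero.mpr ht), neg_div_neg_eq,
          mul_div_assoc', ← exp_add]
        ring_nf

lemma gaussianTail_add_gaussianTail_mul_le {k γ : ℝ} (hk0 : 0 < k) (hk1 : k ≤ 1)
    (hγ : 0 < γ) :
    gaussianTail γ + gaussianTail (k * γ) ≤ 2 / k * (exp (-(k ^ 2 * γ ^ 2) / 2) / γ) := by
  have hmono : gaussianTail γ ≤ gaussianTail (k * γ) :=
    gaussianTail_antitone (mul_le_of_le_one_left hγ.le hk1)
  have htail := gaussianTail_le_exp_div (mul_pos hk0 hγ)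
  calc gaussianTail γ + gaussianTail (k * γ) ≤ 2 * (exp (-(k * γ) ^ 2 / 2) / (k * γ)) := by
        linarith
    _ = 2 / k * (exp (-(k ^ 2 * γ ^ 2) / 2) / γ) := by
        rw [mul_pow]
        field_simp

lemma eventually_exp_le_mul_exp_sq {c : ℝ} (hc : 0 < c) :
    ∀ᶠ γ in atTop, exp γ ≤ c * exp (γ ^ 2) := by
  have hgap : Tendsto (fun γ : ℝ => exp (γ ^ 2 - γ)) atTop atTop :=
    tendsto_exp_atTop.comp <| (tendsto_id.atTop_mul_atTop₀ (tendsto_atTop_add_const_right _ (-1)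
      tendsto_id)).congr fun γ => by simp only [id]; ring
  filter_upwards [hgap.eventually_ge_atTop c⁻¹] with γ hγ
  calc exp γ = c * (c⁻¹ * exp γ) := by field_simp
    _ ≤ c * (exp (γ ^ 2 - γ) * exp γ) := by gcongr
    _ = c * exp (γ ^ 2) := by rw [← exp_add, sub_add_cancel]

/-- For `0 < k ≤ 1`, with `Ẽ[Z] = Φ̄(γ) + Φ̄(kγ)` and
`Ẽ[Z²] = e^{γ²}(Φ̄(2γ) + Φ̄((k−1)γ))`, we have
`Ẽ[Z] = O(e^{−k²γ²/2}/γ)`, `Ẽ[Z²] = O(e^{γ²})`, and the relative second moment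
`Ẽ[Z²]/Ẽ[Z]²` grows at least exponentially in `γ`. -/
theorem stmt_13 (k : ℝ) (hk0 : 0 < k) (hk1 : k ≤ 1)
    (Φbar m1 m2 : ℝ → ℝ)
    (hΦbar : ∀ t, Φbar t = ((gaussianReal 0 1) (Set.Ici t)).toReal)
    (hm1 : ∀ γ, m1 γ = Φbar γ + Φbar (k * γ))
    (hm2 : ∀ γ, m2 γ = Real.exp (γ ^ 2) * (Φbar (2 * γ) + Φbar ((k - 1) * γ))) :
    (m1 =O[atTop] fun γ => Real.exp (-(k ^ 2 * γ ^ 2) / 2) / γ) ∧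
    (m2 =O[atTop] fun γ => Real.exp (γ ^ 2)) ∧
    (∃ c > (0 : ℝ), ∀ᶠ γ in atTop, Real.exp (c * γ) ≤ m2 γ / (m1 γ) ^ 2) := by
  obtain rfl : Φbar = gaussianTail := funext hΦbar
  have hm1_pos γ : 0 < m1 γ := hm1 γ ▸ add_pos (gaussianTail_pos _) (gaussianTail_pos _)
  have hm2_nonneg γ : 0 ≤ m2 γ :=
    hm2 γ ▸ mul_nonneg (exp_nonneg _) (add_pos (gaussianTail_pos _) (gaussianTail_pos _)).le
  refine ⟨?_, ?_, 1, one_pos, ?_⟩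
  · refine IsBigO.of_bound (2 / k) ?_
    filter_upwards [eventually_gt_atTop 0] with γ hγ
    rw [norm_of_nonneg (hm1_pos γ).le, norm_of_nonneg (by positivity), hm1]
    exact gaussianTail_add_gaussianTail_mul_le hk0 hk1 hγ
  · refine isBigO_of_le' (c := 2) _ fun γ => ?_
    rw [norm_of_nonneg (hm2_nonneg γ), norm_of_nonneg (exp_nonneg _), hm2]
    have hsum : gaussianTail (2 * γ) + gaussianTail ((k - 1) * γ) ≤ 2 := by
      linarith [gaussianTail_le_one (2 * γ), gaussianTail_le_one ((k - 1) * γ)]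
    exact (mul_le_mul_of_nonneg_left hsum (exp_nonneg _)).trans_eq (mul_comm _ _)
  · have hc₀ := gaussianTail_pos 0
    filter_upwards [eventually_ge_atTop 0,
      eventually_exp_le_mul_exp_sq (by positivity : 0 < gaussianTail 0 / 4)] with γ hγ hexp
    have hm1_sq : m1 γ ^ 2 ≤ 2 ^ 2 := by
      gcongr
      · exact (hm1_pos γ).le
      · linarith [hm1 γ, gaussianTail_le_one γ, gaussianTail_le_one (k * γ)]
    have hm2_ge : gaussianTail 0 * exp (γ ^ 2) ≤ m2 γ := by
      rw [hm2, mul_comm]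
      gcongr
      linarith [gaussianTail_pos (2 * γ),
        gaussianTail_antitone (mul_nonpos_of_nonpos_of_nonneg (sub_nonpos.mpr hk1) hγ)]
    rw [one_mul, le_div_iff₀ (pow_pos (hm1_pos γ) 2)]
    calc exp γ * m1 γ ^ 2 ≤ gaussianTail 0 / 4 * exp (γ ^ 2) * 2 ^ 2 := by gcongr
      _ = gaussianTail 0 * exp (γ ^ 2) := by ring
      _ ≤ m2 γ := hm2_ge
end

section
/- The constraint y = max(x_1, ..., x_n) for scalars with |x_i| < M and |y| ≤ M is equivalent to the mixed-integer system: y ≤ x_i + 2M(1 − z_i) for all i, y ≥ x_i for all i, ∑_i z_i = 1, z_i ∈ {0,1}. -/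
/-! The maximum is the upper bound of the `xᵢ` that is attained. The binary `z` selects the index
where it is attained: for `zᵢ = 1` the constraint reads `y ≤ xᵢ`, while for `zᵢ = 0` it reads
`y ≤ xᵢ + 2M`, which holds anyway because `y ≤ M < xᵢ + 2M`. -/

theorem Finset.eq_sup'_iff {ι α : Type*} [LinearOrder α] {s : Finset ι} (hs : s.Nonempty)
    (f : ι → α) (a : α) : a = s.sup' hs f ↔ (∃ i ∈ s, f i = a) ∧ ∀ i ∈ s, f i ≤ a := by
  constructor
  · rintro rfl
    obtain ⟨i, hi, hmax⟩ := s.exists_mem_eq_sup' hs f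
    exact ⟨⟨i, hi, hmax.symm⟩, fun j hj => s.le_sup' f hj⟩
  · rintro ⟨⟨i, hi, rfl⟩, hle⟩
    exact le_antisymm (s.le_sup' f hi) (s.sup'_le hs f hle)

theorem exists_eq_one_of_sum_eq_one {ι R : Type*} [Fintype ι] [AddCommMonoid R] [One R]
    [NeZero (1 : R)] {z : ι → R} (hz : ∀ i, z i = 0 ∨ z i = 1) (hsum : ∑ i, z i = 1) :
    ∃ i, z i = 1 := by
  by_contra! hne
  have hzero : ∑ i, z i = 0 := Finset.sum_eq_zero fun i _ => (hz i).resolve_right (hne i)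
  exact one_ne_zero (hsum.symm.trans hzero)

theorem Pi.single_one_eq_zero_or_eq_one {ι R : Type*} [DecidableEq ι] [Zero R] [One R]
    (i j : ι) : (Pi.single i 1 : ι → R) j = 0 ∨ (Pi.single i 1 : ι → R) j = 1 := by
  rcases eq_or_ne j i with rfl | hji
  · exact .inr (Pi.single_eq_same j 1)
  · exact .inl (Pi.single_eq_of_ne hji 1)

theorem Pi.eq_of_single_one_apply_eq_one {ι R : Type*} [DecidableEq ι] [Zero R] [One R]
    [NeZero (1 : R)] {i j : ι} (h : (Pi.single i 1 : ι → R) j = 1) : j = i := by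
  by_contra hji
  exact zero_ne_one ((Pi.single_eq_of_ne hji 1).symm.trans h)

theorem le_add_two_mul_mul_one_sub_iff {α : Type*} [CommRing α] [LinearOrder α]
    [IsStrictOrderedRing α] {M x y z : α} (hx : -M < x) (hy : y ≤ M) (hz : z = 0 ∨ z = 1) :
    y ≤ x + 2 * M * (1 - z) ↔ (z = 1 → y ≤ x) := by
  rcases hz with rfl | rfl
  · simp only [sub_zero, mul_one, zero_ne_one, false_imp_iff, iff_true]
    linarith
  · simp

theorem stmt_18_general (n : ℕ) (hn : 0 < n) (M : ℝ)
    (x : Fin n → ℝ) (hx : ∀ i, |x i| < M) (y : ℝ) (hy : |y| ≤ M) :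
    y = Finset.univ.sup' (Finset.univ_nonempty_iff.2 ⟨⟨0, hn⟩⟩) x ↔
      ∃ z : Fin n → ℝ, (∀ i, z i = 0 ∨ z i = 1) ∧
        (∀ i, y ≤ x i + 2 * M * (1 - z i)) ∧ (∀ i, x i ≤ y) ∧ ∑ i, z i = 1 := by
  have bigM_iff {z : Fin n → ℝ} (hz : ∀ i, z i = 0 ∨ z i = 1) (i : Fin n) :=
    le_add_two_mul_mul_one_sub_iff (abs_lt.1 (hx i)).1 (abs_le.1 hy).2 (hz i)
  rw [Finset.eq_sup'_iff]
  constructor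
  · rintro ⟨⟨i₀, -, rfl⟩, hle⟩
    have hbin := Pi.single_one_eq_zero_or_eq_one (R := ℝ) i₀
    refine ⟨Pi.single i₀ 1, hbin, fun i => (bigM_iff hbin i).2 fun hi => ?_,
      fun i => hle i (Finset.mem_univ i), Fintype.sum_pi_single' i₀ 1⟩
    rw [Pi.eq_of_single_one_apply_eq_one hi]
  · rintro ⟨z, hbin, hub, hlb, hsum⟩
    obtain ⟨i, hi⟩ := exists_eq_one_of_sum_eq_one hbin hsum
    exact ⟨⟨i, Finset.mem_univ i, le_antisymm (hlb i) ((bigM_iff hbin i).1 (hub i) hi)⟩,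
      fun j _ => hlb j⟩

/-- Big-M mixed-integer reformulation of the max constraint: for `|xᵢ| < M`
and `|y| ≤ M`, `y = max(x₁,…,xₙ)` holds iff there are binaries `z₁,…,zₙ`
summing to one with `y ≤ xᵢ + 2M(1 − zᵢ)` and `y ≥ xᵢ` for all `i`. -/
theorem stmt_18 (n : ℕ) (hn : 0 < n) (M : ℝ) (hM : 0 < M)
    (x : Fin n → ℝ) (hx : ∀ i, |x i| < M) (y : ℝ) (hy : |y| ≤ M) :
    y = Finset.univ.sup' (Finset.univ_nonempty_iff.2 ⟨⟨0, hn⟩⟩) x ↔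
      ∃ z : Fin n → ℝ, (∀ i, z i = 0 ∨ z i = 1) ∧
        (∀ i, y ≤ x i + 2 * M * (1 - z i)) ∧ (∀ i, x i ≤ y) ∧ ∑ i, z i = 1 :=
  stmt_18_general n hn M x hx y hy
end
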